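/- Let u ∈ C^* and W(x,y) = u^2/(xy) + u^2 x + u x y + u y + u/x on (C^*)^2. Then the set of critical points of W in (C^*)^2 equals { (x, -u) : x ∈ C^*, x^2 + x = 1/u } ∪ { (x, 1/x^2) : x ∈ C^*, u x^3 = x + 1 }. -/

import Mathlib

/-!
Clearing denominators, `∂W/∂x = 0` becomes `(x²y - 1)(u + y) = 0` and `∂W/∂y = 0` becomes
`xy²(x + 1) = u`. The first equation splits the critical locus into the branches `y = -u` and
`y = 1/x²`; substituting each into the second gives `u(x² + x) = 1` and `ux³ = x + 1`.
-/

section CriticalPoints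

variable {u x y : ℂ}

theorem partial_x_eq_zero_iff (hu : u ≠ 0) (hx : x ≠ 0) (hy : y ≠ 0) :
    -u^2 / (x^2 * y) + u^2 + u * y - u / x^2 = 0 ↔ (x^2 * y - 1) * (u + y) = 0 := by
  have hscale : (-u^2 / (x^2 * y) + u^2 + u * y - u / x^2) * (x^2 * y / u) =
      (x^2 * y - 1) * (u + y) := by
    field_simp
    ring
  rw [← hscale, mul_eq_zero, or_iff_left (by positivity)]

theorem partial_y_eq_zero_iff (hu : u ≠ 0) (hx : x ≠ 0) (hy : y ≠ 0) :
    -u^2 / (x * y^2) + u * x + u = 0 ↔ x * y^2 * (x + 1) = u := by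
  have hscale : (-u^2 / (x * y^2) + u * x + u) * (x * y^2 / u) = x * y^2 * (x + 1) - u := by
    field_simp
    ring
  rw [← sub_eq_zero (a := x * y^2 * (x + 1)), ← hscale, mul_eq_zero, or_iff_left (by positivity)]

theorem partial_y_eq_zero_iff_of_snd_eq_neg (hu : u ≠ 0) :
    x * (-u)^2 * (x + 1) = u ↔ x^2 + x = 1 / u := by
  rw [show x * (-u)^2 * (x + 1) = u * ((x^2 + x) * u) by ring, eq_div_iff hu, mul_eq_left₀ hu]

theorem partial_y_eq_zero_iff_of_snd_eq_inv_sq (hx : x ≠ 0) :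
    x * (1 / x^2)^2 * (x + 1) = u ↔ u * x^3 = x + 1 := by
  rw [show x * (1 / x^2)^2 * (x + 1) = (x + 1) / x^3 by field_simp, div_eq_iff (by positivity),
    eq_comm]

end CriticalPoints

/-- For u ∈ ℂ* and W(x,y) = u²/(xy) + u²x + uxy + uy + u/x on (ℂ*)², the set of
critical points of W (where ∂W/∂x = -u²/(x²y) + u² + uy - u/x² and
∂W/∂y = -u²/(xy²) + ux + u both vanish) equals
{ (x,-u) : x² + x = 1/u } ∪ { (x,1/x²) : ux³ = x + 1 }. -/
theorem stmt_4 (u : ℂ) (hu : u ≠ 0) :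
    {p : ℂ × ℂ | p.1 ≠ 0 ∧ p.2 ≠ 0 ∧
        -u^2 / (p.1^2 * p.2) + u^2 + u * p.2 - u / p.1^2 = 0 ∧
        -u^2 / (p.1 * p.2^2) + u * p.1 + u = 0} =
      {p : ℂ × ℂ | ∃ x : ℂ, x ≠ 0 ∧ p = (x, -u) ∧ x^2 + x = 1 / u} ∪
      {p : ℂ × ℂ | ∃ x : ℂ, x ≠ 0 ∧ p = (x, 1 / x^2) ∧ u * x^3 = x + 1} := by
  ext ⟨x, y⟩
  simp only [Set.mem_ofPred_eq, Set.mem_union, Prod.mk.injEq]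
  constructor
  · rintro ⟨hx, hy, hdx, hdy⟩
    rw [partial_x_eq_zero_iff hu hx hy, mul_eq_zero] at hdx
    rw [partial_y_eq_zero_iff hu hx hy] at hdy
    rcases hdx with hinv | hneg
    · obtain rfl : y = 1 / x^2 := eq_one_div_of_mul_eq_one_right (sub_eq_zero.1 hinv)
      exact Or.inr ⟨x, hx, ⟨rfl, rfl⟩, (partial_y_eq_zero_iff_of_snd_eq_inv_sq hx).1 hdy⟩
    · obtain rfl : y = -u := eq_neg_of_add_eq_zero_right hneg
      exact Or.inl ⟨x, hx, ⟨rfl, rfl⟩, (partial_y_eq_zero_iff_of_snd_eq_neg hu).1 hdy⟩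
  · rintro (⟨x, hx, ⟨rfl, rfl⟩, h⟩ | ⟨x, hx, ⟨rfl, rfl⟩, h⟩)
    · have hy : -u ≠ 0 := neg_ne_zero.2 hu
      refine ⟨hx, hy, (partial_x_eq_zero_iff hu hx hy).2 ?_,
        (partial_y_eq_zero_iff hu hx hy).2 ((partial_y_eq_zero_iff_of_snd_eq_neg hu).2 h)⟩
      rw [add_neg_cancel, mul_zero]
    · have hy : 1 / x^2 ≠ 0 := one_div_ne_zero (pow_ne_zero 2 hx)
      refine ⟨hx, hy, (partial_x_eq_zero_iff hu hx hy).2 ?_,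
        (partial_y_eq_zero_iff hu hx hy).2 ((partial_y_eq_zero_iff_of_snd_eq_inv_sq hx).2 h)⟩
      rw [mul_one_div_cancel (pow_ne_zero 2 hx), sub_self, zero_mul]
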